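/- If G is a k-regular graph with k ≥ 2 admitting an error-detecting identifying code, then S = V(G) is an error-correcting identifying code: every vertex has |N[v]| ≥ 3 and every pair of distinct vertices u,v has |N[u] △ N[v]| ≥ 3 (in fact ≥ 4). -/

import Mathlib

/-!
Regularity makes all closed neighbourhoods finite of the same size `k + 1`, so for distinct
`u, v` the differences `N[u] \ N[v]` and `N[v] \ N[u]` have equal size. An error-detecting code
forces one of them, and hence both, to have at least two elements, so
`|N[u] ∆ N[v]| ≥ 4`; and `|N[v]| = k + 1 ≥ 3`.
-/

open SimpleGraph

variable {V : Type*}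

/-- Closed neighborhood of `v` in `G`. -/
def closedNbhd (G : SimpleGraph V) (v : V) : Set V := insert v (G.neighborSet v)

/-- `S` is an error-correcting identifying code for `G`: every vertex is 3-dominated
and every pair of distinct vertices is 3-distinguished. -/
def IsErrIC (G : SimpleGraph V) (S : Set V) : Prop :=
  (∀ v : V, 3 ≤ (closedNbhd G v ∩ S).ncard) ∧
  ∀ u v : V, u ≠ v → 3 ≤ (symmDiff (closedNbhd G u ∩ S) (closedNbhd G v ∩ S)).ncard

/-- `G` has no closed twins and no open twins. -/
def TwinFree (G : SimpleGraph V) : Prop :=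
  ∀ u v : V, u ≠ v →
    closedNbhd G u ≠ closedNbhd G v ∧ G.neighborSet u ≠ G.neighborSet v

/-- `S` is an error-detecting identifying code for `G`. -/
def IsDetIC (G : SimpleGraph V) (S : Set V) : Prop :=
  (∀ v : V, 2 ≤ (closedNbhd G v ∩ S).ncard) ∧
  ∀ u v : V, u ≠ v →
    2 ≤ ((closedNbhd G u ∩ S) \ (closedNbhd G v ∩ S)).ncard ∨
    2 ≤ ((closedNbhd G v ∩ S) \ (closedNbhd G u ∩ S)).ncard

namespace Set

variable {α : Type*}

theorem ncard_symmDiff {s t : Set α} (hs : s.Finite) (ht : t.Finite) :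
    (symmDiff s t).ncard = (s \ t).ncard + (t \ s).ncard :=
  ncard_union_eq disjoint_sdiff_sdiff hs.sdiff ht.sdiff

theorem ncard_inter_sdiff_inter_le {s t : Set α} (u : Set α) (hs : s.Finite) :
    ((s ∩ u) \ (t ∩ u)).ncard ≤ (s \ t).ncard := by
  rw [← inter_sdiff_distrib_right]
  exact ncard_le_ncard inter_subset_left hs.sdiff

end Set

theorem ncard_closedNbhd {G : SimpleGraph V} {v : V} (hv : (G.neighborSet v).Finite) :
    (closedNbhd G v).ncard = (G.neighborSet v).ncard + 1 :=
  Set.ncard_insert_of_notMem G.notMem_neighborSet_self hv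

theorem IsDetIC.two_le_ncard_closedNbhd_sdiff {G : SimpleGraph V} {S : Set V}
    (hS : IsDetIC G S) (hfin : ∀ v, (closedNbhd G v).Finite)
    (hcard : ∀ u v, (closedNbhd G u).ncard = (closedNbhd G v).ncard)
    {u v : V} (huv : u ≠ v) :
    2 ≤ (closedNbhd G u \ closedNbhd G v).ncard := by
  have hsdiff :
      (closedNbhd G u \ closedNbhd G v).ncard = (closedNbhd G v \ closedNbhd G u).ncard :=
    (Set.ncard_eq_ncard_iff_ncard_sdiff_eq_ncard_sdiff (hfin u) (hfin v)).mp (hcard u v)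
  rcases hS.2 u v huv with h | h
  · exact h.trans (Set.ncard_inter_sdiff_inter_le S (hfin u))
  · exact hsdiff ▸ h.trans (Set.ncard_inter_sdiff_inter_le S (hfin v))

theorem stmt12_general (G : SimpleGraph V) (k : ℕ) (hk : 2 ≤ k)
    (hreg : ∀ v : V, (G.neighborSet v).ncard = k)
    (h : ∃ S : Set V, IsDetIC G S) :
    IsErrIC G Set.univ ∧
    ∀ u v : V, u ≠ v → 4 ≤ (symmDiff (closedNbhd G u) (closedNbhd G v)).ncard := by
  obtain ⟨S, hS⟩ := h
  -- `ncard` is `0` on infinite sets, so a positive degree forces finite neighbourhoods.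
  have hnbhd_fin (v : V) : (G.neighborSet v).Finite :=
    Set.finite_of_ncard_pos (hreg v ▸ by omega)
  have hcard (v : V) : (closedNbhd G v).ncard = k + 1 := by
    rw [ncard_closedNbhd (hnbhd_fin v), hreg]
  have hfin (v : V) : (closedNbhd G v).Finite := (hnbhd_fin v).insert v
  have hsep (u v : V) (huv : u ≠ v) :
      4 ≤ (symmDiff (closedNbhd G u) (closedNbhd G v)).ncard := by
    have huv_sdiff := hS.two_le_ncard_closedNbhd_sdiff hfin (by simp [hcard]) huv
    have hvu_sdiff := hS.two_le_ncard_closedNbhd_sdiff hfin (by simp [hcard]) huv.symm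
    rw [Set.ncard_symmDiff (hfin u) (hfin v)]
    omega
  refine ⟨⟨fun v => ?_, fun u v huv => ?_⟩, hsep⟩
  · rw [Set.inter_univ, hcard]
    omega
  · simp only [Set.inter_univ]
    exact le_trans (by norm_num) (hsep u v huv)

theorem stmt12 [Fintype V] (G : SimpleGraph V) (k : ℕ) (hk : 2 ≤ k)
    (hreg : ∀ v : V, (G.neighborSet v).ncard = k)
    (h : ∃ S : Set V, IsDetIC G S) :
    IsErrIC G Set.univ ∧
    ∀ u v : V, u ≠ v → 4 ≤ (symmDiff (closedNbhd G u) (closedNbhd G v)).ncard :=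
  stmt12_general G k hk hreg h
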